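/- For 0 < q < p ≤ 1, n ≥ 1, and any convex function f : [0,1] → ℝ, the revised (p,q)-Bernstein operator satisfies B_{n,p,q}(f; x) ≥ f(x) for all x ∈ [0,1]. -/

import Mathlib

open Finset

noncomputable def pqInt (p q : ℝ) (m : ℕ) : ℝ := (p ^ m - q ^ m) / (p - q)

noncomputable def pqFact (p q : ℝ) (m : ℕ) : ℝ := ∏ j ∈ Finset.Icc 1 m, pqInt p q j

noncomputable def pqChoose (p q : ℝ) (n k : ℕ) : ℝ :=
  pqFact p q n / (pqFact p q k * pqFact p q (n - k))

/-- The sample node `[k]_{p,q}/(p^{k-n}[n]_{p,q}) = p^{n-k}[k]_{p,q}/[n]_{p,q}`. -/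
noncomputable def pqNode (p q : ℝ) (n k : ℕ) : ℝ :=
  p ^ (n - k) * pqInt p q k / pqInt p q n

/-- Basis function `b_{n,k}(x)` of the revised (p,q)-Bernstein operator. -/
noncomputable def pqBasis (p q : ℝ) (n k : ℕ) (x : ℝ) : ℝ :=
  (p ^ (n * (n - 1) / 2))⁻¹ * pqChoose p q n k * p ^ (k * (k - 1) / 2) * x ^ k *
    ∏ s ∈ Finset.range (n - k), (p ^ s - q ^ s * x)

/-- The revised (p,q)-Bernstein operator. -/
noncomputable def pqBern (p q : ℝ) (n : ℕ) (f : ℝ → ℝ) (x : ℝ) : ℝ :=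
  ∑ k ∈ Finset.range (n + 1), pqBasis p q n k x * f (pqNode p q n k)

/-!
Up to the factor `p ^ (n(n-1)/2)`, the basis functions are the terms of a (p,q)-binomial
expansion: the (p,q)-Pascal recurrence makes their sum telescope to one, and the identity
`[n+1] [n,k] = [n+1,k+1] [k+1]` shows that their first moment against the nodes is `x`.
For `x ∈ [0, 1]` they are nonnegative, so `B_{n,p,q}(f; x)` is a convex combination of values
of `f` at points of `[0, 1]` with barycentre `x`, and Jensen's inequality applies.
-/

open Nat (triangle_succ)

section PQCalculus

variable {p q : ℝ}

lemma pqInt_zero : pqInt p q 0 = 0 := by simp [pqInt]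

lemma pqInt_add (a b : ℕ) : pqInt p q (a + b) = p ^ a * pqInt p q b + q ^ b * pqInt p q a := by
  simp only [pqInt, div_eq_mul_inv]
  ring

lemma pqInt_pos (hq : 0 ≤ q) (hqp : q < p) {m : ℕ} (hm : m ≠ 0) : 0 < pqInt p q m :=
  div_pos (sub_pos.2 (pow_lt_pow_left₀ hqp hq hm)) (sub_pos.2 hqp)

lemma pqInt_nonneg (hq : 0 ≤ q) (hqp : q < p) (m : ℕ) : 0 ≤ pqInt p q m :=
  div_nonneg (sub_nonneg.2 (pow_le_pow_left₀ hq hqp.le m)) (sub_nonneg.2 hqp.le)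

lemma pqFact_zero : pqFact p q 0 = 1 := by simp [pqFact]

lemma pqFact_succ (m : ℕ) : pqFact p q (m + 1) = pqFact p q m * pqInt p q (m + 1) :=
  prod_Icc_succ_top (by omega) _

lemma pqFact_pos (hq : 0 ≤ q) (hqp : q < p) (m : ℕ) : 0 < pqFact p q m :=
  prod_pos fun _ hj => pqInt_pos hq hqp (Nat.one_le_iff_ne_zero.1 (mem_Icc.1 hj).1)

lemma pqChoose_pos (hq : 0 ≤ q) (hqp : q < p) (n k : ℕ) : 0 < pqChoose p q n k :=
  div_pos (pqFact_pos hq hqp n) (mul_pos (pqFact_pos hq hqp k) (pqFact_pos hq hqp (n - k)))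

lemma pqChoose_zero_right (hq : 0 ≤ q) (hqp : q < p) (n : ℕ) : pqChoose p q n 0 = 1 := by
  rw [pqChoose, pqFact_zero, Nat.sub_zero, one_mul, div_self (pqFact_pos hq hqp n).ne']

lemma pqChoose_self (hq : 0 ≤ q) (hqp : q < p) (n : ℕ) : pqChoose p q n n = 1 := by
  rw [pqChoose, Nat.sub_self, pqFact_zero, mul_one, div_self (pqFact_pos hq hqp n).ne']

lemma pqChoose_succ_succ (hq : 0 ≤ q) (hqp : q < p) {n j : ℕ} (hj : j < n) :
    pqChoose p q (n + 1) (j + 1) =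
      p ^ (j + 1) * pqChoose p q n (j + 1) + q ^ (n - j) * pqChoose p q n j := by
  obtain ⟨m, rfl⟩ : ∃ m, n = j + m + 1 := ⟨n - j - 1, by omega⟩
  have := (pqFact_pos hq hqp (j + m + 1)).ne'
  have := (pqFact_pos hq hqp j).ne'
  have := (pqFact_pos hq hqp m).ne'
  have := (pqInt_pos hq hqp (Nat.succ_ne_zero j)).ne'
  have := (pqInt_pos hq hqp (Nat.succ_ne_zero m)).ne'
  rw [pqChoose, pqChoose, pqChoose, show j + m + 1 + 1 - (j + 1) = m + 1 by omega,
    show j + m + 1 - (j + 1) = m by omega, show j + m + 1 - j = m + 1 by omega,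
    pqFact_succ (j + m + 1), pqFact_succ j, pqFact_succ m,
    show j + m + 1 + 1 = (j + 1) + (m + 1) by ring, pqInt_add]
  field_simp

lemma pqInt_succ_mul_pqChoose (hq : 0 ≤ q) (hqp : q < p) (n k : ℕ) :
    pqInt p q (n + 1) * pqChoose p q n k = pqChoose p q (n + 1) (k + 1) * pqInt p q (k + 1) := by
  have := (pqFact_pos hq hqp k).ne'
  have := (pqFact_pos hq hqp (n - k)).ne'
  have := (pqInt_pos hq hqp (Nat.succ_ne_zero k)).ne'
  rw [pqChoose, pqChoose, Nat.add_sub_add_right, pqFact_succ, pqFact_succ]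
  field_simp

end PQCalculus

noncomputable def pqWeight (p q : ℝ) (n k : ℕ) (x : ℝ) : ℝ :=
  pqChoose p q n k * p ^ (k * (k - 1) / 2) * x ^ k * ∏ s ∈ range (n - k), (p ^ s - q ^ s * x)

section PQWeight

variable {p q : ℝ} (x : ℝ)

lemma pqBasis_eq_inv_mul_pqWeight (n k : ℕ) :
    pqBasis p q n k x = (p ^ (n * (n - 1) / 2))⁻¹ * pqWeight p q n k x := by
  simp only [pqBasis, pqWeight, mul_assoc]

lemma pqWeight_succ_zero (hq : 0 ≤ q) (hqp : q < p) (n : ℕ) :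
    pqWeight p q (n + 1) 0 x = p ^ n * pqWeight p q n 0 x - q ^ n * x * pqWeight p q n 0 x := by
  simp only [pqWeight, pqChoose_zero_right hq hqp, Nat.sub_zero, prod_range_succ]
  ring

lemma pqWeight_succ_self (hq : 0 ≤ q) (hqp : q < p) (n : ℕ) :
    pqWeight p q (n + 1) (n + 1) x = p ^ n * x * pqWeight p q n n x := by
  simp only [pqWeight, pqChoose_self hq hqp, Nat.sub_self, triangle_succ]
  ring

lemma pqWeight_succ_succ (hq : 0 ≤ q) (hqp : q < p) {n j : ℕ} (hj : j < n) :
    pqWeight p q (n + 1) (j + 1) x =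
      p ^ n * pqWeight p q n (j + 1) x
        - p ^ (j + 1) * q ^ (n - (j + 1)) * x * pqWeight p q n (j + 1) x
        + p ^ j * q ^ (n - j) * x * pqWeight p q n j x := by
  obtain ⟨m, rfl⟩ : ∃ m, n = j + m + 1 := ⟨n - j - 1, by omega⟩
  rw [pqWeight, pqWeight, pqWeight, pqChoose_succ_succ hq hqp hj,
    show j + m + 1 + 1 - (j + 1) = m + 1 by omega, show j + m + 1 - (j + 1) = m by omega,
    show j + m + 1 - j = m + 1 by omega, prod_range_succ, triangle_succ]
  ring

lemma sum_pqWeight (hq : 0 ≤ q) (hqp : q < p) (n : ℕ) :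
    ∑ k ∈ range (n + 1), pqWeight p q n k x = p ^ (n * (n - 1) / 2) := by
  induction n with
  | zero => simp [pqWeight, pqChoose_self hq hqp]
  | succ n ih =>
    set a : ℕ → ℝ := fun k => p ^ k * q ^ (n - k) * x * pqWeight p q n k x
    have hsucc : ∀ j ∈ range n,
        pqWeight p q (n + 1) (j + 1) x = p ^ n * pqWeight p q n (j + 1) x - (a (j + 1) - a j) :=
      fun j hj => by rw [pqWeight_succ_succ x hq hqp (mem_range.1 hj)]; ring
    rw [sum_range_succ', sum_range_succ, sum_congr rfl hsucc, sum_sub_distrib, sum_range_sub,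
      ← mul_sum, pqWeight_succ_zero x hq hqp, pqWeight_succ_self x hq hqp, triangle_succ,
      pow_add, ← ih, sum_range_succ' (fun k => pqWeight p q n k x)]
    simp only [a, Nat.sub_self, Nat.sub_zero]
    ring

lemma pqWeight_succ_mul_pqNode (hq : 0 ≤ q) (hqp : q < p) {n k : ℕ} (hk : k ≤ n) :
    pqWeight p q (n + 1) (k + 1) x * pqNode p q (n + 1) (k + 1) =
      p ^ n * x * pqWeight p q n k x := by
  have hn := (pqInt_pos hq hqp (Nat.succ_ne_zero n)).ne'
  have hchoose : pqChoose p q n k =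
      pqChoose p q (n + 1) (k + 1) * pqInt p q (k + 1) / pqInt p q (n + 1) := by
    rw [← pqInt_succ_mul_pqChoose hq hqp, mul_div_cancel_left₀ _ hn]
  have hpow : p ^ n = p ^ k * p ^ (n - k) := by rw [← pow_add, Nat.add_sub_cancel' hk]
  rw [pqWeight, pqWeight, pqNode, triangle_succ, Nat.add_sub_add_right, hpow, hchoose]
  generalize ∏ s ∈ range (n - k), (p ^ s - q ^ s * x) = P
  field_simp
  ring

lemma sum_pqWeight_mul_pqNode (hq : 0 ≤ q) (hqp : q < p) {n : ℕ} (hn : n ≠ 0) :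
    ∑ k ∈ range (n + 1), pqWeight p q n k x * pqNode p q n k = p ^ (n * (n - 1) / 2) * x := by
  obtain ⟨m, rfl⟩ := Nat.exists_eq_succ_of_ne_zero hn
  rw [sum_range_succ', pqNode, pqInt_zero, mul_zero, zero_div, mul_zero, add_zero,
    sum_congr rfl fun k hk => pqWeight_succ_mul_pqNode x hq hqp (mem_range_succ_iff.1 hk),
    ← mul_sum, sum_pqWeight x hq hqp, Nat.succ_eq_add_one, triangle_succ, pow_add]
  ring

end PQWeight

section Basis

variable {p q : ℝ}

lemma sum_pqBasis (hq : 0 ≤ q) (hqp : q < p) (n : ℕ) (x : ℝ) :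
    ∑ k ∈ range (n + 1), pqBasis p q n k x = 1 := by
  have hp : p ≠ 0 := (hq.trans_lt hqp).ne'
  simp only [pqBasis_eq_inv_mul_pqWeight, ← mul_sum, sum_pqWeight x hq hqp]
  exact inv_mul_cancel₀ (pow_ne_zero _ hp)

lemma sum_pqBasis_mul_pqNode (hq : 0 ≤ q) (hqp : q < p) {n : ℕ} (hn : n ≠ 0) (x : ℝ) :
    ∑ k ∈ range (n + 1), pqBasis p q n k x * pqNode p q n k = x := by
  have hp : p ≠ 0 := (hq.trans_lt hqp).ne'
  simp only [pqBasis_eq_inv_mul_pqWeight, mul_assoc, ← mul_sum,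
    sum_pqWeight_mul_pqNode x hq hqp hn]
  rw [← mul_assoc, inv_mul_cancel₀ (pow_ne_zero _ hp), one_mul]

lemma pqBasis_nonneg (hq : 0 ≤ q) (hqp : q < p) (n k : ℕ) {x : ℝ}
    (hx : x ∈ Set.Icc (0 : ℝ) 1) :
    0 ≤ pqBasis p q n k x := by
  have hp : 0 ≤ p := hq.trans hqp.le
  have hfactor : ∀ s, 0 ≤ p ^ s - q ^ s * x := fun s =>
    calc 0 ≤ p ^ s - q ^ s := sub_nonneg.2 (pow_le_pow_left₀ hq hqp.le s)
      _ ≤ p ^ s - q ^ s * x := by gcongr; exact mul_le_of_le_one_right (pow_nonneg hq s) hx.2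
  have hchoose := (pqChoose_pos hq hqp n k).le
  have hx0 := hx.1
  rw [pqBasis]
  exact mul_nonneg (by positivity) (prod_nonneg fun s _ => hfactor s)

lemma pqNode_mem_Icc (hq : 0 ≤ q) (hqp : q < p) {n k : ℕ} (hk : k ≤ n) :
    pqNode p q n k ∈ Set.Icc (0 : ℝ) 1 := by
  have hp : 0 ≤ p := hq.trans hqp.le
  have hsplit : pqInt p q n = p ^ (n - k) * pqInt p q k + q ^ k * pqInt p q (n - k) := by
    rw [← pqInt_add, Nat.sub_add_cancel hk]
  refine ⟨div_nonneg (mul_nonneg (pow_nonneg hp _) (pqInt_nonneg hq hqp k))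
      (pqInt_nonneg hq hqp n),
    div_le_one_of_le₀ ?_ (pqInt_nonneg hq hqp n)⟩
  rw [hsplit]
  exact le_add_of_nonneg_right (mul_nonneg (pow_nonneg hq k) (pqInt_nonneg hq hqp (n - k)))

end Basis

theorem pqBern_convex_general (p q : ℝ) (n : ℕ) (hn : 1 ≤ n)
    (hq : 0 < q) (hqp : q < p) (f : ℝ → ℝ)
    (hf : ConvexOn ℝ (Set.Icc (0:ℝ) 1) f) (x : ℝ) (hx : x ∈ Set.Icc (0:ℝ) 1) :
    f x ≤ pqBern p q n f x := by
  have jensen := hf.map_sum_le (fun k _ => pqBasis_nonneg hq.le hqp n k hx)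
    (sum_pqBasis hq.le hqp n x) fun k hk => pqNode_mem_Icc hq.le hqp (mem_range_succ_iff.1 hk)
  simp only [smul_eq_mul, sum_pqBasis_mul_pqNode hq.le hqp (Nat.one_le_iff_ne_zero.1 hn)] at jensen
  exact jensen

theorem pqBern_convex (p q : ℝ) (n : ℕ) (hn : 1 ≤ n)
    (hq : 0 < q) (hqp : q < p) (hp : p ≤ 1) (f : ℝ → ℝ)
    (hf : ConvexOn ℝ (Set.Icc (0:ℝ) 1) f) (x : ℝ) (hx : x ∈ Set.Icc (0:ℝ) 1) :
    f x ≤ pqBern p q n f x :=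
  pqBern_convex_general p q n hn hq hqp f hf x hx
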